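/- Let H be a discrete Schrödinger operator with bounded potential, ψ ∈ ℓ²(ℤ), E₀ ∈ ℝ, ε > 0, and let a ≤ b be integers, I = [a,b] ∩ ℤ. For z ∈ ℂ∖ℝ let u_z = (H − z)^{−1}ψ. Suppose that lim_{δ→0⁺} inf{ |u_z(b+1)|² + |u_z(b)|² + |u_z(a)|² + |u_z(a−1)|² : z ∈ ℂ∖ℝ, |z − E₀| < δ } < ε. Then for every solution v of Hv = E₀v: | Σ_{n=a}^{b} v(n) \overline{ψ(n)} | ≤ √ε · ( ‖V(b)‖ + ‖V(a−1)‖ ). -/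

import Mathlib

open MeasureTheory Filter Set
noncomputable section

abbrev Seq2 := lp (fun _ : ℤ => ℂ) 2

/-- `H` acts as the discrete Schrödinger operator with potential `W`. -/
def IsSchrodinger (W : ℤ → ℝ) (H : Seq2 →L[ℂ] Seq2) : Prop :=
  ∀ ψ : Seq2, ∀ n : ℤ,
    (H ψ) n = ψ (n + 1) + ψ (n - 1) + (W n : ℂ) * ψ n

/-- The unitary group `e^{-itH}`. -/
def timeEvol (H : Seq2 →L[ℂ] Seq2) (t : ℝ) : Seq2 →L[ℂ] Seq2 :=
  NormedSpace.exp ((-(t : ℂ) * Complex.I) • H)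

/-- Time-averaged probability `a(ψ,n,T)`. -/
def aFun (H : Seq2 →L[ℂ] Seq2) (ψ : Seq2) (n : ℤ) (T : ℝ) : ℝ :=
  (2 / T) * ∫ t in Set.Ioi (0 : ℝ), Real.exp (-2 * t / T) * ‖(timeEvol H t ψ) n‖ ^ 2

/-- Right outside probability `P_r(ψ,N,T)`. -/
def Pright (H : Seq2 →L[ℂ] Seq2) (ψ : Seq2) (N T : ℝ) : ℝ :=
  ∑' n : ℤ, if N ≤ (n : ℝ) then aFun H ψ n T else 0

/-- Left outside probability `P_l(ψ,N,T)`. -/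
def Pleft (H : Seq2 →L[ℂ] Seq2) (ψ : Seq2) (N T : ℝ) : ℝ :=
  ∑' n : ℤ, if (n : ℝ) ≤ -N then aFun H ψ n T else 0

/-- Outside probability `P(ψ,N,T)`. -/
def Pout (H : Seq2 →L[ℂ] Seq2) (ψ : Seq2) (N T : ℝ) : ℝ :=
  Pright H ψ N T + Pleft H ψ N T

/-- Moments of the position operator `⟨|X_ψ|^p⟩(T)`. -/
def moment (H : Seq2 →L[ℂ] Seq2) (ψ : Seq2) (p T : ℝ) : ℝ :=
  ∑' n : ℤ, |(n : ℝ)| ^ p * aFun H ψ n T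

/-- Upper transport exponent `β⁺(ψ,p)`. -/
def betaPlus (H : Seq2 →L[ℂ] Seq2) (ψ : Seq2) (p : ℝ) : ℝ :=
  limsup (fun T : ℝ => Real.log (moment H ψ p T) / (p * Real.log T)) atTop

/-- Lower transport exponent `β⁻(ψ,p)`. -/
def betaMinus (H : Seq2 →L[ℂ] Seq2) (ψ : Seq2) (p : ℝ) : ℝ :=
  liminf (fun T : ℝ => Real.log (moment H ψ p T) / (p * Real.log T)) atTop

/-- `S⁺(ψ,α)`. -/
def SPlus (H : Seq2 →L[ℂ] Seq2) (ψ : Seq2) (α : ℝ) : EReal :=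
  -limsup (fun T : ℝ => ((Real.log (Pout H ψ (T ^ α) T) / Real.log T : ℝ) : EReal)) atTop

/-- `S⁻(ψ,α)`. -/
def SMinus (H : Seq2 →L[ℂ] Seq2) (ψ : Seq2) (α : ℝ) : EReal :=
  -liminf (fun T : ℝ => ((Real.log (Pout H ψ (T ^ α) T) / Real.log T : ℝ) : EReal)) atTop

/-- Upper transport exponent `α_u⁺(ψ) = sup {α > 0 : S⁺(ψ,α) < ∞}` (`sup ∅ = 0`). -/
def alphaUPlus (H : Seq2 →L[ℂ] Seq2) (ψ : Seq2) : EReal :=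
  sSup (insert (0 : EReal) {x : EReal | ∃ α : ℝ, x = (α : EReal) ∧ 0 < α ∧ SPlus H ψ α < ⊤})

/-- Upper transport exponent `α_u⁻(ψ) = sup {α > 0 : S⁻(ψ,α) < ∞}` (`sup ∅ = 0`). -/
def alphaUMinus (H : Seq2 →L[ℂ] Seq2) (ψ : Seq2) : EReal :=
  sSup (insert (0 : EReal) {x : EReal | ∃ α : ℝ, x = (α : EReal) ∧ 0 < α ∧ SMinus H ψ α < ⊤})

/-- One-step transfer matrix `A(n,z)`. -/
def Amat (W : ℤ → ℝ) (n : ℤ) (z : ℂ) : Matrix (Fin 2) (Fin 2) ℂ :=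
  !![z - (W n : ℂ), -1; 1, 0]

/-- Transfer matrix `M(n,k;z)`. -/
def Tmat (W : ℤ → ℝ) (n k : ℤ) (z : ℂ) : Matrix (Fin 2) (Fin 2) ℂ :=
  if k ≤ n then (((List.range (n - k).toNat).map fun j => Amat W (n - j) z).prod)
  else (((List.range (k - n).toNat).map fun j => (Amat W (n + 1 + j) z)⁻¹).prod)

/-- Operator (Euclidean) norm of a 2×2 complex matrix. -/
def opNorm2 (M : Matrix (Fin 2) (Fin 2) ℂ) : ℝ :=
  ‖Matrix.toEuclideanCLM (𝕜 := ℂ) M‖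

/-- `ψ` has exponentially decaying entries. -/
def ExpDecaying (ψ : Seq2) : Prop :=
  ∃ D a : ℝ, 0 < D ∧ 0 < a ∧ ∀ n : ℤ, ‖ψ n‖ ≤ D * Real.exp (-a * |(n : ℝ)|)

/-- `v` is a formal solution of `Hv = Ev` for the potential `W`. -/
def IsSolution (W : ℤ → ℝ) (E : ℝ) (v : ℤ → ℝ) : Prop :=
  ∀ n : ℤ, v (n + 1) + v (n - 1) + W n * v n = E * v n

/-- `max_{n ∈ S} ‖M(n,k;z)‖`. -/
def maxTM (W : ℤ → ℝ) (k : ℤ) (S : Set ℤ) (z : ℂ) : ℝ :=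
  sSup ((fun n => opNorm2 (Tmat W n k z)) '' S)

/-!
For `z ∉ ℝ` put `u = (H - z)⁻¹ ψ` and let `f` solve `H f = z̄ f` with the initial data
`v (a - 1), v a`. Since `conj u` solves `(H - z̄) (conj u) = conj ψ`, summation by parts turns
`∑_{n=a}^{b} f n * conj (ψ n)` into the difference of the Wronskians of `f` and `conj u` at `b`
and at `a - 1`; by Cauchy–Schwarz each is at most `√ε` times the norm of the corresponding pair
of values of `f` once the boundary values of `u` are small. This bound is a closed condition in
`z`, it holds at points `z` accumulating at `E₀`, and at `z = E₀` the solution `f` is `v`.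
-/

open ComplexConjugate Topology

lemma summable_norm_sq (x : Seq2) : Summable fun n : ℤ => ‖x n‖ ^ 2 := by
  simpa using (lp.memℓp x).summable (by norm_num : 0 < (2 : ENNReal).toReal)

lemma summable_conj_mul_comp_add (x y : Seq2) (c d : ℤ) :
    Summable fun n : ℤ => conj (x (n + c)) * y (n + d) := by
  have hx := (summable_norm_sq x).comp_injective (add_left_injective c)
  have hy := (summable_norm_sq y).comp_injective (add_left_injective d)
  refine Summable.of_norm_bounded ((hx.add hy).div_const 2) fun n => ?_
  simp only [norm_mul, RCLike.norm_conj, Function.comp_apply]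
  linarith [two_mul_le_add_sq ‖x (n + c)‖ ‖y (n + d)‖]

lemma hasSum_sub_comp_sub_one {E : Type*} [AddCommGroup E] [TopologicalSpace E]
    [IsTopologicalAddGroup E] {p : ℤ → E} (hp : Summable p) :
    HasSum (fun n => p n - p (n - 1)) 0 := by
  have hp' : HasSum (fun n => p (n - 1)) (∑' n, p n) :=
    (Equiv.subRight 1).hasSum_iff.2 hp.hasSum
  simpa using hp.hasSum.sub hp'

theorem IsSchrodinger.isSelfAdjoint {W : ℤ → ℝ} {H : Seq2 →L[ℂ] Seq2} (hH : IsSchrodinger W H) :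
    IsSelfAdjoint H := by
  rw [ContinuousLinearMap.isSelfAdjoint_iff_isSymmetric]
  intro x y
  change inner ℂ (H x) y = inner ℂ x (H y)
  let p : ℤ → ℂ := fun n => conj (x (n + 1) : ℂ) * (y n : ℂ)
  let q : ℤ → ℂ := fun n => conj (x n : ℂ) * (y (n + 1) : ℂ)
  have hp : Summable p := by simpa using summable_conj_mul_comp_add x y 1 0
  have hq : Summable q := by simpa using summable_conj_mul_comp_add x y 0 1
  -- the potential terms cancel pointwise and the hopping terms telescope
  have hpq : ∀ n, inner ℂ ((H x) n) (y n) - inner ℂ (x n) ((H y) n) =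
      (p n - p (n - 1)) - (q n - q (n - 1)) := by
    intro n
    rw [RCLike.inner_apply', RCLike.inner_apply', hH x n, hH y n]
    simp only [p, q, map_add, map_mul, Complex.conj_ofReal, sub_add_cancel]
    ring
  have hsum := (hasSum_sub_comp_sub_one hp).sub (hasSum_sub_comp_sub_one hq)
  rw [← funext hpq, sub_zero] at hsum
  rw [lp.inner_eq_tsum, lp.inner_eq_tsum, ← sub_eq_zero,
    ← (lp.summable_inner (𝕜 := ℂ) (H x) y).tsum_sub (lp.summable_inner (𝕜 := ℂ) x (H y))]
  exact hsum.tsum_eq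

lemma IsSchrodinger.isUnit_sub_smul_one {W : ℤ → ℝ} {H : Seq2 →L[ℂ] Seq2}
    (hH : IsSchrodinger W H) {z : ℂ} (hz : z.im ≠ 0) : IsUnit (H - z • 1) := by
  by_contra h
  refine hz (hH.isSelfAdjoint.im_eq_zero_of_mem_spectrum ?_)
  rwa [spectrum.mem_iff, Algebra.algebraMap_eq_smul_one, ← IsUnit.neg_iff, neg_sub]

lemma IsSchrodinger.resolvent_apply {W : ℤ → ℝ} {H : Seq2 →L[ℂ] Seq2}
    (hH : IsSchrodinger W H) {z : ℂ} (hz : z.im ≠ 0) (ψ : Seq2) (n : ℤ) :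
    (Ring.inverse (H - z • 1) ψ) (n + 1) + (Ring.inverse (H - z • 1) ψ) (n - 1) +
      (W n : ℂ) * (Ring.inverse (H - z • 1) ψ) n - z * (Ring.inverse (H - z • 1) ψ) n = ψ n := by
  have h : ((H - z • 1) * Ring.inverse (H - z • 1)) ψ = ψ := by
    rw [Ring.mul_inverse_cancel _ (hH.isUnit_sub_smul_one hz)]
    rfl
  conv_rhs => rw [← h]
  rw [← hH]
  rfl

/-- The solution of `f (n + 1) + f (n - 1) + V n * f n = E * f n` (for `n ≥ a`) with
`f (a - 1) = c₀` and `f a = c₁`; its `j`-th term is `f (a - 1 + j)`. -/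
def solSeq (V : ℤ → ℂ) (E : ℂ) (a : ℤ) (c₀ c₁ : ℂ) : ℕ → ℂ
  | 0 => c₀
  | 1 => c₁
  | j + 2 => (E - V (a + j)) * solSeq V E a c₀ c₁ (j + 1) - solSeq V E a c₀ c₁ j

/-- `solSeq` re-indexed by `ℤ`; to the left of `a - 1` it is the junk value `c₀`. -/
def solZ (V : ℤ → ℂ) (E : ℂ) (a : ℤ) (c₀ c₁ : ℂ) (n : ℤ) : ℂ :=
  solSeq V E a c₀ c₁ (n - (a - 1)).toNat

section Solution

variable (V : ℤ → ℂ) (a : ℤ) (c₀ c₁ : ℂ)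

lemma continuous_solSeq : ∀ j, Continuous fun E => solSeq V E a c₀ c₁ j
  | 0 => continuous_const
  | 1 => continuous_const
  | j + 2 => ((continuous_id.sub continuous_const).mul (continuous_solSeq (j + 1))).sub
      (continuous_solSeq j)

@[fun_prop]
lemma continuous_solZ (n : ℤ) : Continuous fun E => solZ V E a c₀ c₁ n :=
  continuous_solSeq V a c₀ c₁ _

lemma solZ_add_one_add_solZ_sub_one (E : ℂ) {n : ℤ} (hn : a ≤ n) :
    solZ V E a c₀ c₁ (n + 1) + solZ V E a c₀ c₁ (n - 1) + V n * solZ V E a c₀ c₁ n =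
      E * solZ V E a c₀ c₁ n := by
  obtain ⟨j, rfl⟩ : ∃ j : ℕ, n = a + j := ⟨(n - a).toNat, by omega⟩
  have h2 : (a + j + 1 - (a - 1)).toNat = j + 2 := by omega
  have h1 : (a + j - (a - 1)).toNat = j + 1 := by omega
  have h0 : (a + j - 1 - (a - 1)).toNat = j := by omega
  simp only [solZ, h2, h1, h0, solSeq]
  ring

variable {V a} in
lemma eq_solZ {E : ℂ} {f : ℤ → ℂ}
    (hf : ∀ n, a ≤ n → f (n + 1) + f (n - 1) + V n * f n = E * f n) {n : ℤ} (hn : a - 1 ≤ n) :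
    f n = solZ V E a (f (a - 1)) (f a) n := by
  suffices h : ∀ j : ℕ, f (a - 1 + j) = solSeq V E a (f (a - 1)) (f a) j by
    rw [solZ, ← h]
    congr
    omega
  intro j
  induction j using Nat.twoStepInduction with
  | zero => simp [solSeq]
  | one => simp [solSeq]
  | more j ih₀ ih₁ =>
    rw [solSeq, ← ih₀, ← ih₁]
    have := hf (a + j) (by omega)
    push_cast
    ring_nf at this ⊢
    linear_combination this

end Solution

lemma solZ_eq_of_isSolution {W : ℤ → ℝ} {E : ℝ} {v : ℤ → ℝ} (hv : IsSolution W E v) (a : ℤ)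
    {n : ℤ} (hn : a - 1 ≤ n) : solZ (fun n => (W n : ℂ)) E a (v (a - 1)) (v a) n = v n :=
  (eq_solZ (f := fun n => (v n : ℂ)) (fun n _ => mod_cast hv n) hn).symm

def wronskian {R : Type*} [CommRing R] (f g : ℤ → R) (n : ℤ) : R :=
  f n * g (n + 1) - f (n + 1) * g n

lemma wronskian_sub_wronskian_sub_one {R : Type*} [CommRing R] (f g : ℤ → R) (n : ℤ) :
    wronskian f g n - wronskian f g (n - 1) =
      f n * (g (n + 1) + g (n - 1)) - g n * (f (n + 1) + f (n - 1)) := by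
  simp only [wronskian, sub_add_cancel]
  ring

lemma Finset.sum_Icc_sub_comp_sub_one {M : Type*} [AddCommGroup M] (F : ℤ → M) {a b : ℤ}
    (hab : a - 1 ≤ b) : ∑ n ∈ Finset.Icc a b, (F n - F (n - 1)) = F b - F (a - 1) := by
  induction b, hab using Int.leInduction with
  | base => simp
  | succ b hb ih =>
    rw [← Finset.insert_Icc_right_eq_Icc_add_one (by omega), Finset.sum_insert (by simp), ih,
      add_sub_cancel_right]
    abel

lemma norm_wronskian_le (f g : ℤ → ℂ) (n : ℤ) :
    ‖wronskian f g n‖ ≤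
      √(‖f (n + 1)‖ ^ 2 + ‖f n‖ ^ 2) * √(‖g (n + 1)‖ ^ 2 + ‖g n‖ ^ 2) := by
  rw [← Real.sqrt_mul (by positivity)]
  apply Real.le_sqrt_of_sq_le
  calc ‖wronskian f g n‖ ^ 2 ≤ (‖f n‖ * ‖g (n + 1)‖ + ‖f (n + 1)‖ * ‖g n‖) ^ 2 := by
        gcongr
        exact (norm_sub_le _ _).trans_eq (by rw [norm_mul, norm_mul])
    _ ≤ _ := by nlinarith [sq_nonneg (‖f n‖ * ‖g n‖ - ‖f (n + 1)‖ * ‖g (n + 1)‖)]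

lemma norm_sum_mul_le_of_recurrence {V : ℤ → ℂ} {E : ℂ} {f g φ : ℤ → ℂ} {a b : ℤ} {ε : ℝ}
    (hab : a - 1 ≤ b) (hf : ∀ n, a ≤ n → f (n + 1) + f (n - 1) + V n * f n = E * f n)
    (hg : ∀ n, g (n + 1) + g (n - 1) + V n * g n - E * g n = φ n)
    (hε : ‖g (b + 1)‖ ^ 2 + ‖g b‖ ^ 2 + ‖g a‖ ^ 2 + ‖g (a - 1)‖ ^ 2 ≤ ε) :
    ‖∑ n ∈ Finset.Icc a b, f n * φ n‖ ≤
      √ε * (√(‖f (b + 1)‖ ^ 2 + ‖f b‖ ^ 2) + √(‖f a‖ ^ 2 + ‖f (a - 1)‖ ^ 2)) := by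
  have hsum : ∑ n ∈ Finset.Icc a b, f n * φ n = wronskian f g b - wronskian f g (a - 1) := by
    rw [← Finset.sum_Icc_sub_comp_sub_one _ hab]
    refine Finset.sum_congr rfl fun n hn => ?_
    rw [wronskian_sub_wronskian_sub_one]
    linear_combination g n * hf n (Finset.mem_Icc.1 hn).1 - f n * hg n
  have hgb : √(‖g (b + 1)‖ ^ 2 + ‖g b‖ ^ 2) ≤ √ε := Real.sqrt_le_sqrt (by nlinarith)
  have hga : √(‖g a‖ ^ 2 + ‖g (a - 1)‖ ^ 2) ≤ √ε := Real.sqrt_le_sqrt (by nlinarith)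
  have hwa := norm_wronskian_le f g (a - 1)
  rw [sub_add_cancel] at hwa
  calc ‖∑ n ∈ Finset.Icc a b, f n * φ n‖
      ≤ ‖wronskian f g b‖ + ‖wronskian f g (a - 1)‖ := hsum ▸ norm_sub_le _ _
    _ ≤ √(‖f (b + 1)‖ ^ 2 + ‖f b‖ ^ 2) * √ε + √(‖f a‖ ^ 2 + ‖f (a - 1)‖ ^ 2) * √ε := by
        gcongr
        · exact (norm_wronskian_le f g b).trans (by gcongr)
        · exact hwa.trans (by gcongr)
    _ = _ := by ring

lemma mem_closure_of_tendsto_sInf {X : Type*} [SeminormedAddCommGroup X] {P : X → Prop}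
    {φ : X → ℝ} {c : X} {l ε : ℝ} (hP : c ∈ closure {z | P z}) (hl : l < ε)
    (h : Tendsto (fun δ => sInf {r | ∃ z, P z ∧ ‖z - c‖ < δ ∧ r = φ z}) (𝓝[>] 0) (𝓝 l)) :
    c ∈ closure {z | P z ∧ φ z < ε} := by
  rw [Metric.mem_closure_iff] at hP ⊢
  intro δ hδ
  obtain ⟨δ', hinf, hδ'⟩ := ((h.eventually (gt_mem_nhds hl)).and (Ioo_mem_nhdsGT hδ)).exists
  obtain ⟨z₀, hz₀, hz₀c⟩ := hP δ' hδ'.1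
  have hne : {r | ∃ z, P z ∧ ‖z - c‖ < δ' ∧ r = φ z}.Nonempty :=
    ⟨_, z₀, hz₀, by rwa [← dist_eq_norm, dist_comm], rfl⟩
  obtain ⟨-, ⟨z, hz, hzc, rfl⟩, hzε⟩ := exists_lt_of_csInf_lt hne hinf
  exact ⟨z, ⟨hz, hzε⟩, by rw [dist_comm, dist_eq_norm]; linarith [hδ'.2]⟩

lemma ofReal_mem_closure_setOf_im_ne_zero (x : ℝ) : (x : ℂ) ∈ closure {z : ℂ | z.im ≠ 0} := by
  refine mem_closure_of_tendsto (f := fun t : ℝ => x + t * Complex.I) (b := 𝓝[>] 0) ?_ ?_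
  · exact ((by fun_prop : Continuous fun t : ℝ => (x : ℂ) + t * Complex.I).tendsto' 0 _
      (by simp)).mono_left nhdsWithin_le_nhds
  · exact eventually_nhdsWithin_of_forall fun t ht => by simpa using ht.ne'

theorem stmt8_general (W : ℤ → ℝ)
    (H : Seq2 →L[ℂ] Seq2) (hH : IsSchrodinger W H)
    (ψ : Seq2) (E₀ : ℝ) (ε : ℝ) (a b : ℤ) (hab : a ≤ b)
    (hres : ∃ l : ℝ, l < ε ∧
      Filter.Tendsto (fun δ : ℝ => sInf {r : ℝ | ∃ z : ℂ, z.im ≠ 0 ∧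
          ‖z - (E₀ : ℂ)‖ < δ ∧
          r = ‖(Ring.inverse (H - z • (1 : Seq2 →L[ℂ] Seq2)) ψ) (b + 1)‖ ^ 2 +
              ‖(Ring.inverse (H - z • (1 : Seq2 →L[ℂ] Seq2)) ψ) b‖ ^ 2 +
              ‖(Ring.inverse (H - z • (1 : Seq2 →L[ℂ] Seq2)) ψ) a‖ ^ 2 +
              ‖(Ring.inverse (H - z • (1 : Seq2 →L[ℂ] Seq2)) ψ) (a - 1)‖ ^ 2})
        (nhdsWithin 0 (Set.Ioi 0)) (nhds l)) :
    ∀ v : ℤ → ℝ, IsSolution W E₀ v →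
      ‖∑ n ∈ Finset.Icc a b, (v n : ℂ) * (starRingEnd ℂ) (ψ n)‖ ≤
        Real.sqrt ε * (Real.sqrt (v (b + 1) ^ 2 + v b ^ 2) +
          Real.sqrt (v a ^ 2 + v (a - 1) ^ 2)) := by
  intro v hv
  obtain ⟨l, hl, hlim⟩ := hres
  let f : ℂ → ℤ → ℂ := fun z => solZ (fun n => (W n : ℂ)) (conj z) a (v (a - 1)) (v a)
  have hfv : ∀ n, a - 1 ≤ n → f E₀ n = v n := fun n hn => by
    simp only [f, Complex.conj_ofReal, solZ_eq_of_isSolution hv a hn]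
  have hclosed : IsClosed {z | ‖∑ n ∈ Finset.Icc a b, f z n * conj (ψ n)‖ ≤
      √ε * (√(‖f z (b + 1)‖ ^ 2 + ‖f z b‖ ^ 2) + √(‖f z a‖ ^ 2 + ‖f z (a - 1)‖ ^ 2))} :=
    isClosed_le (by fun_prop) (by fun_prop)
  have hE₀ := closure_minimal ?_ hclosed
    (mem_closure_of_tendsto_sInf (ofReal_mem_closure_setOf_im_ne_zero E₀) hl hlim)
  · have hsum : ∑ n ∈ Finset.Icc a b, f E₀ n * conj (ψ n) =
        ∑ n ∈ Finset.Icc a b, (v n : ℂ) * conj (ψ n) :=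
      Finset.sum_congr rfl fun n hn => by rw [hfv n (by linarith [(Finset.mem_Icc.1 hn).1])]
    simpa [hsum, hfv (b + 1) (by omega), hfv b (by omega), hfv a (by omega), hfv (a - 1) le_rfl]
      using hE₀
  · rintro z ⟨hz, hsmall⟩
    exact norm_sum_mul_le_of_recurrence (by omega)
      (fun n hn => solZ_add_one_add_solZ_sub_one _ _ _ _ _ hn)
      (g := fun n => conj (Ring.inverse (H - z • 1) ψ n))
      (fun n => by simpa using congrArg conj (hH.resolvent_apply hz ψ n))
      (by simpa using hsmall.le)

/-- If the resolvent `u_z = (H-z)⁻¹ψ` stays small at the boundary of the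
window `[a,b]` for `z` near `E₀`, then `ψ` is almost orthogonal on `[a,b]` to every solution
at energy `E₀`. -/
theorem stmt8 (W : ℤ → ℝ) (hW : ∃ B : ℝ, ∀ n : ℤ, |W n| ≤ B)
    (H : Seq2 →L[ℂ] Seq2) (hH : IsSchrodinger W H)
    (ψ : Seq2) (E₀ : ℝ) (ε : ℝ) (hε : 0 < ε) (a b : ℤ) (hab : a ≤ b)
    (hres : ∃ l : ℝ, l < ε ∧
      Filter.Tendsto (fun δ : ℝ => sInf {r : ℝ | ∃ z : ℂ, z.im ≠ 0 ∧
          ‖z - (E₀ : ℂ)‖ < δ ∧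
          r = ‖(Ring.inverse (H - z • (1 : Seq2 →L[ℂ] Seq2)) ψ) (b + 1)‖ ^ 2 +
              ‖(Ring.inverse (H - z • (1 : Seq2 →L[ℂ] Seq2)) ψ) b‖ ^ 2 +
              ‖(Ring.inverse (H - z • (1 : Seq2 →L[ℂ] Seq2)) ψ) a‖ ^ 2 +
              ‖(Ring.inverse (H - z • (1 : Seq2 →L[ℂ] Seq2)) ψ) (a - 1)‖ ^ 2})
        (nhdsWithin 0 (Set.Ioi 0)) (nhds l)) :
    ∀ v : ℤ → ℝ, IsSolution W E₀ v →
      ‖∑ n ∈ Finset.Icc a b, (v n : ℂ) * (starRingEnd ℂ) (ψ n)‖ ≤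
        Real.sqrt ε * (Real.sqrt (v (b + 1) ^ 2 + v b ^ 2) +
          Real.sqrt (v a ^ 2 + v (a - 1) ^ 2)) :=
  stmt8_general W H hH ψ E₀ ε a b hab hres
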